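/- Let F̂ ∈ ℝ^{d×n}, let Γ ∈ ℝ^{n×n} be symmetric positive semidefinite with symmetric positive semidefinite square root Γ^{1/2}, set H_d = F̂ Γ F̂ᵀ with spectral decomposition H_d = Σ_{i=1}^d λ_i u_i u_iᵀ (orthonormal u_i, λ_1 ≥ ⋯ ≥ λ_d ≥ 0) and rank-k truncation Ĥ_d = Σ_{i=1}^k λ_i u_i u_iᵀ. Let W ∈ ℝ^{r×d} be a design matrix, and define Ψ(W) = (1/2) log det(I_n + Γ^{1/2} F̂ᵀ Wᵀ W F̂ Γ^{1/2}) and Ψ̂(W) = (1/2) log det(I_r + W Ĥ_d Wᵀ). Then Ψ(W) − Ψ̂(W) ≤ (1/2) log det(I_r + W (H_d − Ĥ_d) Wᵀ). -/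

import Mathlib

/-!
Since `Γ = Γh * Γh`, the Weinstein–Aronszajn identity `det (1 + X * Y) = det (1 + Y * X)` turns
the first determinant into `det (1 + W H_d Wᵀ)`. Splitting `H_d = Ĥ_d + (H_d - Ĥ_d)` into two sums
of positive rank-one terms, it remains to show `det (1 + B + C) ≤ det (1 + B) * det (1 + C)` for
positive semidefinite `B, C`. Factoring
`det ((1 + B) + C) = det (1 + B) * det (1 + √C (1 + B)⁻¹ √C)`, this follows from `(1 + B)⁻¹ ≤ 1`
and the monotonicity of `det` in the Loewner order.
-/

open Matrix Finset
open scoped MatrixOrder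

namespace Matrix

variable {m : Type*} [Fintype m]

theorem posSemidef_sum_smul_vecMulVec_self {ι : Type*} (s : Finset ι) {c : ι → ℝ}
    (hc : ∀ i ∈ s, 0 ≤ c i) (v : ι → m → ℝ) :
    (∑ i ∈ s, c i • vecMulVec (v i) (v i)).PosSemidef :=
  posSemidef_sum s fun i hi => by
    simpa using (posSemidef_vecMulVec_self_star (v i)).smul (hc i hi)

variable [DecidableEq m]

theorem PosSemidef.one_le_det_one_add {P : Matrix m m ℝ} (hP : P.PosSemidef) :
    1 ≤ (1 + P).det := by
  have hH : (1 + P).IsHermitian := isHermitian_one.add hP.1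
  have hspec := (posSemidef_iff_isHermitian_and_spectrum_nonneg.mp hP).2
  rw [hH.det_eq_prod_eigenvalues]
  refine Finset.one_le_prod fun i _ => ?_
  have hi : hH.eigenvalues i - 1 ∈ spectrum ℝ P := by
    have h := hH.eigenvalues_mem_spectrum_real i
    rw [← sub_add_cancel (hH.eigenvalues i) 1, spectrum.add_mem_iff] at h
    simpa using h
  simpa using hspec hi

theorem PosDef.det_add_eq {A D : Matrix m m ℝ} (hA : A.PosDef) (hD : D.PosSemidef) :
    (A + D).det = A.det * (1 + CFC.sqrt D * A⁻¹ * CFC.sqrt D).det := by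
  conv_lhs => rw [← CFC.sqrt_mul_sqrt_self D hD.nonneg]
  exact det_add_mul _ _ hA.det_pos.ne'.isUnit

theorem PosDef.det_le_det_of_le {A B : Matrix m m ℝ} (hA : A.PosDef) (hAB : A ≤ B) :
    A.det ≤ B.det := by
  have hX := conjugate_nonneg_of_nonneg hA.inv.posSemidef.nonneg (CFC.sqrt_nonneg (B - A))
  calc A.det = A.det * 1 := (mul_one _).symm
    _ ≤ A.det * (1 + CFC.sqrt (B - A) * A⁻¹ * CFC.sqrt (B - A)).det :=
      mul_le_mul_of_nonneg_left hX.posSemidef.one_le_det_one_add hA.det_pos.le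
    _ = B.det := by rw [← hA.det_add_eq hAB, add_sub_cancel]

theorem PosSemidef.inv_one_add_le_one {B : Matrix m m ℝ} (hB : B.PosSemidef) :
    (1 + B)⁻¹ ≤ 1 := by
  set T := (1 + B)⁻¹
  have hunit : IsUnit (1 + B).det := (PosDef.one.add_posSemidef hB).det_pos.ne'.isUnit
  have hT : T = Tᴴ := by rw [conjTranspose_nonsing_inv, (isHermitian_one.add hB.1).eq]
  have h : 1 - T = T * (B + Bᴴ * B) * Tᴴ := by
    calc 1 - T = T * (1 + B) - T := by rw [nonsing_inv_mul _ hunit]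
      _ = T * B * ((1 + B) * T) := by rw [mul_nonsing_inv _ hunit]; noncomm_ring
      _ = T * (B + Bᴴ * B) * Tᴴ := by rw [← hT, hB.1.eq]; noncomm_ring
  show (1 - T).PosSemidef
  rw [h]
  exact (hB.add (posSemidef_conjTranspose_mul_self B)).mul_mul_conjTranspose_same T

theorem PosSemidef.det_one_add_add_le {B C : Matrix m m ℝ} (hB : B.PosSemidef)
    (hC : C.PosSemidef) : (1 + (B + C)).det ≤ (1 + B).det * (1 + C).det := by
  have h1B : (1 + B).PosDef := PosDef.one.add_posSemidef hB
  have hX := conjugate_nonneg_of_nonneg h1B.inv.posSemidef.nonneg (CFC.sqrt_nonneg C)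
  have hle : CFC.sqrt C * (1 + B)⁻¹ * CFC.sqrt C ≤ C := by
    simpa [CFC.sqrt_mul_sqrt_self C hC.nonneg] using
      conjugate_le_conjugate_of_nonneg hB.inv_one_add_le_one (CFC.sqrt_nonneg C)
  rw [← add_assoc, h1B.det_add_eq hC]
  exact mul_le_mul_of_nonneg_left
    ((PosDef.one.add_posSemidef hX.posSemidef).det_le_det_of_le (add_le_add le_rfl hle))
    h1B.det_pos.le

theorem PosSemidef.log_det_one_add_add_le {B C : Matrix m m ℝ} (hB : B.PosSemidef)
    (hC : C.PosSemidef) :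
    Real.log (1 + (B + C)).det ≤ Real.log (1 + B).det + Real.log (1 + C).det := by
  have hpos {P : Matrix m m ℝ} (hP : P.PosSemidef) : 0 < (1 + P).det :=
    (PosDef.one.add_posSemidef hP).det_pos
  rw [← Real.log_mul (hpos hB).ne' (hpos hC).ne']
  exact Real.log_le_log (hpos (hB.add hC)) (hB.det_one_add_add_le hC)

end Matrix

theorem stmt_7_general {d n r : ℕ} (F : Matrix (Fin d) (Fin n) ℝ)
    (Γ Γh : Matrix (Fin n) (Fin n) ℝ)
    (hΓsq : Γ = Γh * Γh)
    (lam : Fin d → ℝ) (u : Fin d → (Fin d → ℝ))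
    (h_nonneg : ∀ i, 0 ≤ lam i)
    (h_spec : F * Γ * Fᵀ = ∑ i, lam i • vecMulVec (u i) (u i))
    (k : ℕ)
    (W : Matrix (Fin r) (Fin d) ℝ) :
    (1 / 2) * Real.log (1 + Γh * Fᵀ * Wᵀ * W * F * Γh).det -
      (1 / 2) * Real.log
        (1 + W * (∑ i ∈ univ.filter fun i : Fin d => (i : ℕ) < k,
            lam i • vecMulVec (u i) (u i)) * Wᵀ).det ≤
    (1 / 2) * Real.log
        (1 + W * (F * Γ * Fᵀ -
          ∑ i ∈ univ.filter fun i : Fin d => (i : ℕ) < k,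
            lam i • vecMulVec (u i) (u i)) * Wᵀ).det := by
  set Hk := ∑ i ∈ univ.filter fun i : Fin d => (i : ℕ) < k, lam i • vecMulVec (u i) (u i)
  have hHk : Hk.PosSemidef := posSemidef_sum_smul_vecMulVec_self _ (fun i _ => h_nonneg i) u
  have hTail : (F * Γ * Fᵀ - Hk).PosSemidef := by
    rw [h_spec, ← sum_filter_add_sum_filter_not univ fun i : Fin d => (i : ℕ) < k,
      add_sub_cancel_left]
    exact posSemidef_sum_smul_vecMulVec_self _ (fun i _ => h_nonneg i) u
  have hΨ : (1 + Γh * Fᵀ * Wᵀ * W * F * Γh).det =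
      (1 + (W * Hk * Wᵀ + W * (F * Γ * Fᵀ - Hk) * Wᵀ)).det := by
    rw [← Matrix.add_mul, ← Matrix.mul_add, add_sub_cancel, hΓsq]
    simpa only [Matrix.mul_assoc] using det_one_add_mul_comm (Γh * Fᵀ * Wᵀ) (W * F * Γh)
  have hconj {M : Matrix (Fin d) (Fin d) ℝ} (hM : M.PosSemidef) : (W * M * Wᵀ).PosSemidef := by
    simpa [conjTranspose_eq_transpose_of_trivial] using hM.mul_mul_conjTranspose_same W
  rw [hΨ]
  linarith [(hconj hHk).log_det_one_add_add_le (hconj hTail)]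

/-- Intermediate bound in the low-rank EIG error estimate:
`Ψ(W) - Ψ̂(W) ≤ (1/2) log det (I_r + W (H_d - Ĥ_d) Wᵀ)`. -/
theorem stmt_7 {d n r : ℕ} (F : Matrix (Fin d) (Fin n) ℝ)
    (Γ Γh : Matrix (Fin n) (Fin n) ℝ)
    (hΓ : Γ.PosSemidef) (hΓh : Γh.PosSemidef) (hΓsq : Γ = Γh * Γh)
    (lam : Fin d → ℝ) (u : Fin d → (Fin d → ℝ))
    (h_orth : ∀ i j, u i ⬝ᵥ u j = if i = j then 1 else 0)
    (h_decay : ∀ i j : Fin d, i ≤ j → lam j ≤ lam i)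
    (h_nonneg : ∀ i, 0 ≤ lam i)
    (h_spec : F * Γ * Fᵀ = ∑ i, lam i • vecMulVec (u i) (u i))
    (k : ℕ) (hk1 : 1 ≤ k) (hkd : k ≤ d)
    (W : Matrix (Fin r) (Fin d) ℝ)
    (hW01 : ∀ i j, W i j = 0 ∨ W i j = 1)
    (hWrow : ∀ i, ∑ j, W i j = 1)
    (hWcol : ∀ j, (∑ i, W i j) = 0 ∨ (∑ i, W i j) = 1) :
    (1 / 2) * Real.log (1 + Γh * Fᵀ * Wᵀ * W * F * Γh).det -
      (1 / 2) * Real.log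
        (1 + W * (∑ i ∈ univ.filter fun i : Fin d => (i : ℕ) < k,
            lam i • vecMulVec (u i) (u i)) * Wᵀ).det ≤
    (1 / 2) * Real.log
        (1 + W * (F * Γ * Fᵀ -
          ∑ i ∈ univ.filter fun i : Fin d => (i : ℕ) < k,
            lam i • vecMulVec (u i) (u i)) * Wᵀ).det :=
  stmt_7_general F Γ Γh hΓsq lam u h_nonneg h_spec k W
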